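/- Let Δ = [a, b) × [c, d) be an axis-parallel half-open rectangle in ℝ² with Lebesgue measure μ(Δ) = (b − a)(d − c) exactly equal to 2 + α. Then 1 ≤ |Δ ∩ Γ| ≤ 12, i.e., Δ contains at least one and at most twelve points of the lattice Γ. -/

import Mathlib

open Set

/-- The inverse golden ratio `α = (√5 - 1)/2`. -/
noncomputable def invGolden : ℝ := (Real.sqrt 5 - 1) / 2

/-- The rotated lattice `Γ = Aℤ²`, where `A` has rows `(1, -α)` and `(α, 1)`,
i.e. `A(n,m)ᵀ = (n - αm, αn + m)ᵀ`. -/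
def Γ : Set (ℝ × ℝ) :=
  {p | ∃ n m : ℤ, p = ((n : ℝ) - invGolden * m, invGolden * n + m)}

/-! The map `(x, y) ↦ ((2 + α) x, (1 - α) y)` preserves `Γ` (since `α² = 1 - α` it acts on integer
coordinates by a unimodular matrix) and preserves area, so we may assume the width `w` lies in
`[1, 2 + α)` and hence the height `h = (2 + α) / w` in `(1, 2 + α]`.

Lower bound: in the strip `a ≤ x < a + 1` every row `m` carries exactly one lattice point, at
`n = ⌈a + α m⌉`, and the heights of consecutive ones differ by `1` or `1 + α`; so a rectangle of
width `≥ 1` and height `≥ 1 + α` contains a point, and symmetrically with the roles of the axes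
exchanged. Since `(1 + α)² = 2 + α`, one of the two cases applies.

Upper bound: the integer coordinates are `(2 - α) n = x + α y` and `(2 - α) m = y - α x`, which
range over intervals of length at most `2 + 2α < 3 (2 - α)`; so there are at most `3 · 3` points. -/

local notation "α" => invGolden

lemma invGolden_sq : α ^ 2 = 1 - α := by
  have h5 : Real.sqrt 5 ^ 2 = 5 := Real.sq_sqrt (by norm_num)
  unfold invGolden
  linear_combination h5 / 4

lemma invGolden_pos : 0 < α := by
  have : 1 < Real.sqrt 5 := by
    rw [Real.lt_sqrt zero_le_one]
    norm_num
  unfold invGolden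
  linarith

lemma invGolden_lt_four_fifths : α < 4 / 5 := by
  nlinarith [invGolden_sq, invGolden_pos]

lemma inv_two_add_invGolden : (2 + α)⁻¹ = 1 - α :=
  inv_eq_of_mul_eq_one_right (by linear_combination -invGolden_sq)

lemma cast_ceil_add_sub_ceil_mem_Icc {u s : ℝ} (hs₀ : 0 ≤ s) (hs₁ : s ≤ 1) :
    ((⌈u + s⌉ : ℤ) : ℝ) - ⌈u⌉ ∈ Icc 0 1 := by
  have hlo : ⌈u⌉ ≤ ⌈u + s⌉ := Int.ceil_mono (by linarith)
  have hhi : ⌈u + s⌉ ≤ ⌈u⌉ + 1 := by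
    rw [← Int.ceil_add_one]
    exact Int.ceil_mono (by linarith)
  have hlo' : ((⌈u⌉ : ℤ) : ℝ) ≤ ⌈u + s⌉ := by exact_mod_cast hlo
  have hhi' : ((⌈u + s⌉ : ℤ) : ℝ) ≤ ⌈u⌉ + 1 := by exact_mod_cast hhi
  exact ⟨by linarith, by linarith⟩

lemma exists_mem_Ico_of_step_mem_Icc (f : ℤ → ℝ) {g : ℝ}
    (hstep : ∀ m, f (m + 1) - f m ∈ Icc 1 g) (c : ℝ) : ∃ m, f m ∈ Ico c (c + g) := by
  have hmono : Monotone fun m : ℤ => f m - m :=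
    monotone_int_of_le_succ fun m => by push_cast; linarith [(hstep m).1]
  have hbdd : ∃ B : ℤ, ∀ z : ℤ, f z < c → z ≤ B := by
    obtain ⟨B, hB⟩ := exists_int_gt (max 0 (c - f 0))
    refine ⟨B, fun z hz => ?_⟩
    rcases le_or_gt z 0 with hz0 | hz0
    · have : (z : ℝ) ≤ 0 := by exact_mod_cast hz0
      exact_mod_cast (show (z : ℝ) ≤ B by linarith [le_max_left 0 (c - f 0)])
    · have := hmono hz0.le
      simp only [Int.cast_zero, sub_zero] at this
      exact_mod_cast (show (z : ℝ) ≤ B by linarith [le_max_right 0 (c - f 0)])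
  have hinh : ∃ z : ℤ, f z < c := by
    obtain ⟨z, hz⟩ := exists_int_lt (min 0 (c - f 0))
    have hz0 : z ≤ 0 := by exact_mod_cast (hz.trans_le (min_le_left _ _)).le
    have := hmono hz0
    simp only [Int.cast_zero, sub_zero] at this
    exact ⟨z, by linarith [min_le_right 0 (c - f 0)]⟩
  obtain ⟨M, hM, hMmax⟩ := Int.exists_greatest_of_bdd hbdd hinh
  have hnext : c ≤ f (M + 1) := not_lt.1 fun h => by linarith [hMmax _ h]
  exact ⟨M + 1, hnext, by linarith [(hstep M).2]⟩

lemma inter_Γ_nonempty_of_tall {a b c d : ℝ} (hw : 1 ≤ b - a) (hh : 1 + α ≤ d - c) :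
    ((Ico a b ×ˢ Ico c d) ∩ Γ).Nonempty := by
  let f : ℤ → ℝ := fun m => α * ⌈a + α * m⌉ + m
  have hstep : ∀ m, f (m + 1) - f m ∈ Icc 1 (1 + α) := by
    intro m
    have hceil := cast_ceil_add_sub_ceil_mem_Icc (u := a + α * m) invGolden_pos.le
      (by linarith [invGolden_lt_four_fifths])
    have hf : f (m + 1) - f m = α * (⌈a + α * m + α⌉ - ⌈a + α * m⌉) + 1 := by
      simp only [f, Int.cast_add, Int.cast_one, mul_add, mul_one, ← add_assoc]
      ring
    rw [hf]
    constructor <;> nlinarith [hceil.1, hceil.2, invGolden_pos]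
  obtain ⟨m, hm⟩ := exists_mem_Ico_of_step_mem_Icc f hstep c
  refine ⟨(⌈a + α * m⌉ - α * m, f m), ⟨⟨?_, ?_⟩, ?_, ?_⟩, ⌈a + α * m⌉, m, rfl⟩
  · linarith [Int.le_ceil (a + α * m)]
  · linarith [Int.ceil_lt_add_one (a + α * m)]
  · exact hm.1
  · linarith [hm.2]

lemma inter_Γ_nonempty_of_wide {a b c d : ℝ} (hw : 1 + α ≤ b - a) (hh : 1 ≤ d - c) :
    ((Ico a b ×ˢ Ico c d) ∩ Γ).Nonempty := by
  let f : ℤ → ℝ := fun n => n - α * ⌈c - α * n⌉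
  have hstep : ∀ n, f (n + 1) - f n ∈ Icc 1 (1 + α) := by
    intro n
    have hceil := cast_ceil_add_sub_ceil_mem_Icc (u := c - α * n - α) invGolden_pos.le
      (by linarith [invGolden_lt_four_fifths])
    have hf : f (n + 1) - f n = α * (⌈c - α * n - α + α⌉ - ⌈c - α * n - α⌉) + 1 := by
      simp only [f, Int.cast_add, Int.cast_one, mul_add, mul_one, sub_add_cancel, ← sub_sub]
      ring
    rw [hf]
    constructor <;> nlinarith [hceil.1, hceil.2, invGolden_pos]
  obtain ⟨n, hn⟩ := exists_mem_Ico_of_step_mem_Icc f hstep a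
  refine ⟨(f n, α * n + ⌈c - α * n⌉), ⟨⟨hn.1, by linarith [hn.2]⟩, ?_, ?_⟩, n, ⌈c - α * n⌉, rfl⟩
  · linarith [Int.le_ceil (c - α * n)]
  · linarith [Int.ceil_lt_add_one (c - α * n)]

lemma inter_Γ_nonempty {a b c d : ℝ} (hw : 1 ≤ b - a) (hh : 1 ≤ d - c)
    (harea : (b - a) * (d - c) = 2 + α) : ((Ico a b ×ˢ Ico c d) ∩ Γ).Nonempty := by
  by_cases htall : 1 + α ≤ d - c
  · exact inter_Γ_nonempty_of_tall hw htall
  · refine inter_Γ_nonempty_of_wide ?_ hh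
    by_contra hwide
    nlinarith [invGolden_sq]

lemma encard_int_cast_mem_Ico_le (L R : ℝ) (k : ℕ) (h : R - L ≤ k) :
    {n : ℤ | (n : ℝ) ∈ Ico L R}.encard ≤ k := by
  have hset : {n : ℤ | (n : ℝ) ∈ Ico L R} = ↑(Finset.Ico ⌈L⌉ ⌈R⌉) := by
    ext n
    simp [Int.ceil_le, Int.lt_ceil]
  have hR : ⌈R⌉ ≤ ⌈L⌉ + k := Int.ceil_le.2 (by push_cast; linarith [Int.le_ceil L])
  rw [hset, encard_coe_eq_coe_finsetCard, Int.card_Ico]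
  exact_mod_cast (show (⌈R⌉ - ⌈L⌉).toNat ≤ k by omega)

lemma add_invGolden_mul_le {w h : ℝ} (hw₀ : 0 < w) (hw : w ≤ 2 + α) (hh : h ≤ 2 + α)
    (harea : w * h = 2 + α) : w + α * h ≤ 2 + 2 * α := by
  have hw₁ : 1 ≤ w := by nlinarith
  -- `α` and `2 + α` are the roots of `w² - (2 + 2α) w + α (2 + α)`
  have hroots : (w - α) * (w - (2 + α)) ≤ 0 :=
    mul_nonpos_of_nonneg_of_nonpos (by linarith [invGolden_lt_four_fifths]) (by linarith)
  refine le_of_mul_le_mul_left ?_ hw₀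
  linear_combination hroots + α * harea

lemma encard_inter_Γ_le_nine {a b c d : ℝ} (hab : a < b) (hw : b - a ≤ 2 + α)
    (hh : d - c ≤ 2 + α) (harea : (b - a) * (d - c) = 2 + α) :
    ((Ico a b ×ˢ Ico c d) ∩ Γ).encard ≤ 9 := by
  have hα := invGolden_pos
  have hs : 0 < 2 - α := by linarith [invGolden_lt_four_fifths]
  have hcd : 0 < d - c := pos_of_mul_pos_right (harea ▸ by linarith) (sub_pos.2 hab).le
  have hx := add_invGolden_mul_le (sub_pos.2 hab) hw hh harea
  have hy := add_invGolden_mul_le hcd hh hw (by linarith)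
  let N := {n : ℤ | (n : ℝ) ∈ Ico ((a + α * c) / (2 - α)) ((b + α * d) / (2 - α))}
  let M := {m : ℤ | (m : ℝ) ∈ Ico ((c - α * b) / (2 - α)) ((d - α * a) / (2 - α))}
  have hsub : (Ico a b ×ˢ Ico c d) ∩ Γ ⊆
      (fun q : ℤ × ℤ => ((q.1 : ℝ) - α * q.2, α * q.1 + q.2)) '' (N ×ˢ M) := by
    rintro _ ⟨⟨⟨hxa, hxb⟩, hyc, hyd⟩, n, m, rfl⟩
    have hn : (n : ℝ) * (2 - α) = (n - α * m) + α * (α * n + m) := by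
      linear_combination (-(n : ℝ)) * invGolden_sq
    have hm : (m : ℝ) * (2 - α) = (α * n + m) - α * (n - α * m) := by
      linear_combination (-(m : ℝ)) * invGolden_sq
    refine ⟨(n, m), ⟨⟨?_, ?_⟩, ?_, ?_⟩, rfl⟩ <;>
      simp only [div_le_iff₀ hs, lt_div_iff₀ hs]
    · nlinarith
    · nlinarith
    · nlinarith
    · nlinarith
  have hlen : ∀ u v : ℝ, u + α * v ≤ 2 + 2 * α →
      (u + α * v) / (2 - α) ≤ ((3 : ℕ) : ℝ) := fun u v huv => by
    rw [div_le_iff₀ hs]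
    push_cast
    linarith [invGolden_lt_four_fifths]
  have hN : N.encard ≤ 3 :=
    encard_int_cast_mem_Ico_le _ _ 3 (by rw [← sub_div]; convert hlen _ _ hx using 2; ring)
  have hM : M.encard ≤ 3 :=
    encard_int_cast_mem_Ico_le _ _ 3 (by rw [← sub_div]; convert hlen _ _ hy using 2; ring)
  calc ((Ico a b ×ˢ Ico c d) ∩ Γ).encard ≤ (N ×ˢ M).encard :=
        (encard_mono hsub).trans (encard_image_le _ _)
    _ = N.encard * M.encard := encard_prod
    _ ≤ 3 * 3 := mul_le_mul' hN hM
    _ = 9 := by norm_num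

/-- For `t = 2 + α` this acts on the integer coordinates of `Γ` by the unimodular matrix with
rows `(2, -1)` and `(-1, 1)`. -/
noncomputable def hypScale (t : ℝ) : ℝ × ℝ → ℝ × ℝ := Prod.map (t * ·) (t⁻¹ * ·)

lemma hypScale_mul (s t : ℝ) : hypScale (s * t) = hypScale s ∘ hypScale t := by
  ext p <;> simp only [hypScale, Prod.map, Function.comp, mul_inv] <;> ring

lemma hypScale_injective {t : ℝ} (ht : t ≠ 0) : Function.Injective (hypScale t) :=
  (mul_right_injective₀ ht).prodMap (mul_right_injective₀ (inv_ne_zero ht))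

lemma image_hypScale_rect {t : ℝ} (ht : 0 < t) (a b c d : ℝ) :
    hypScale t '' (Ico a b ×ˢ Ico c d) = Ico (t * a) (t * b) ×ˢ Ico (t⁻¹ * c) (t⁻¹ * d) := by
  rw [hypScale, prodMap_image_prod, image_mul_left_Ico ht, image_mul_left_Ico (inv_pos.2 ht)]

lemma image_hypScale_Γ : hypScale (2 + α) '' Γ = Γ := by
  ext p
  constructor
  · rintro ⟨_, ⟨n, m, rfl⟩, rfl⟩
    refine ⟨2 * n - m, m - n, ?_⟩
    simp only [hypScale, Prod.map, inv_two_add_invGolden, Prod.mk.injEq]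
    push_cast
    exact ⟨by linear_combination (-(m : ℝ)) * invGolden_sq,
      by linear_combination (-(n : ℝ)) * invGolden_sq⟩
  · rintro ⟨n, m, rfl⟩
    refine ⟨_, ⟨n + m, n + 2 * m, rfl⟩, ?_⟩
    simp only [hypScale, Prod.map, inv_two_add_invGolden, Prod.mk.injEq]
    push_cast
    exact ⟨by linear_combination (-(n + 2 * m : ℝ)) * invGolden_sq,
      by linear_combination (-(n + m : ℝ)) * invGolden_sq⟩

lemma image_hypScale_zpow_Γ (k : ℤ) : hypScale ((2 + α) ^ k) '' Γ = Γ := by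
  have hβ : (2 + α) ≠ 0 := by linarith [invGolden_pos]
  induction k using Int.induction_on with
  | zero => simp [hypScale]
  | succ k ih => rw [zpow_add_one₀ hβ, mul_comm, hypScale_mul, image_comp, ih, image_hypScale_Γ]
  | pred k ih =>
    refine (image_injective.2 (hypScale_injective hβ)) ?_
    rw [← image_comp, ← hypScale_mul, ← zpow_one_add₀ hβ, add_sub_cancel, ih, image_hypScale_Γ]

lemma encard_image_hypScale_zpow_inter_Γ (k : ℤ) (R : Set (ℝ × ℝ)) :
    (hypScale ((2 + α) ^ k) '' R ∩ Γ).encard = (R ∩ Γ).encard := by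
  have hinj := hypScale_injective (zpow_ne_zero k (by linarith [invGolden_pos] : (2 + α) ≠ 0))
  conv_lhs => rw [← image_hypScale_zpow_Γ k, ← image_inter hinj]
  exact hinj.encard_image _

theorem rect_lattice_point_count_general (a b c d : ℝ) (hab : a < b)
    (harea : (b - a) * (d - c) = 2 + invGolden) :
    1 ≤ ((Ico a b ×ˢ Ico c d) ∩ Γ).encard ∧
      ((Ico a b ×ˢ Ico c d) ∩ Γ).encard ≤ 12 := by
  have hβ : 1 < 2 + α := by linarith [invGolden_pos]
  obtain ⟨k, hk_le, hk_lt⟩ := exists_mem_Ico_zpow (sub_pos.2 hab) hβ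
  set t := (2 + α) ^ (-k)
  have ht : 0 < t := zpow_pos (by linarith) _
  have htk : t * (2 + α) ^ k = 1 := by rw [← zpow_add₀ (by linarith), neg_add_cancel, zpow_zero]
  rw [← encard_image_hypScale_zpow_inter_Γ (-k), image_hypScale_rect ht]
  have hw₁ : 1 ≤ t * b - t * a := by nlinarith
  have hw₂ : t * b - t * a < 2 + α := by
    rw [zpow_add_one₀ (by linarith)] at hk_lt
    nlinarith
  have harea' : (t * b - t * a) * (t⁻¹ * d - t⁻¹ * c) = 2 + α := by
    rw [← harea]
    field_simp
  have hh₁ : 1 ≤ t⁻¹ * d - t⁻¹ * c := by nlinarith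
  have hh₂ : t⁻¹ * d - t⁻¹ * c ≤ 2 + α := by nlinarith
  refine ⟨one_le_encard_iff_nonempty.2 (inter_Γ_nonempty hw₁ hh₁ harea'), ?_⟩
  exact (encard_inter_Γ_le_nine (by linarith) hw₂.le hh₂ harea').trans (by norm_num)

/-- Any axis-parallel half-open rectangle `[a,b) × [c,d)` of area exactly
`2 + α` contains at least one and at most twelve points of the lattice `Γ`. -/
theorem rect_lattice_point_count (a b c d : ℝ) (hab : a < b) (hcd : c < d)
    (harea : (b - a) * (d - c) = 2 + invGolden) :
    1 ≤ ((Ico a b ×ˢ Ico c d) ∩ Γ).encard ∧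
      ((Ico a b ×ˢ Ico c d) ∩ Γ).encard ≤ 12 :=
  rect_lattice_point_count_general a b c d hab harea
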